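/- For the 2×2 case (all B_n traceless 2×2 matrices), under the symmetrized Schlesinger equations with B_0 = 0, the modified Hamiltonians satisfy the generalized Okamoto equation: (1/8)( L_2L_2Ĥ_2 + 2 L_3Ĥ_3 - 5 L_4Ĥ_2 - 2 Ĥ_6 )^2 = (L_3Ĥ_3 - L_4Ĥ_2 - Ĥ_6)·( (Ĥ_3)^2 + 4 Ĥ_2 (L_2Ĥ_2 - Ĥ_4) ) - (L_3Ĥ_2 - Ĥ_5)·( Ĥ_2 L_3Ĥ_2 + Ĥ_3 L_2Ĥ_2 - Ĥ_2 Ĥ_5 ) + (L_2Ĥ_2 - Ĥ_4)(L_2Ĥ_2)^2. -/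

import Mathlib

/-!
Every quantity in the Okamoto equation is a linear combination of the pairwise traces
`tᵢⱼ = tr(BᵢBⱼ)`, `1 ≤ i, j ≤ 5`, and of the triple product `tr(B₁[B₂,B₃])`: the Hamiltonians by
definition (using `B₀ = 0`), their derivatives by the Leibniz rule and the Schlesinger equations,
which give `L_m B₁ = B_{m+1}` and express `L₃B₂`, `L₂B₃` through commutators. Substituting, all
traces involving `B₄` and `B₅` cancel, the left side becomes `tr(B₁[B₂,B₃])² / 32` and the right
side `-det(tᵢⱼ)_{i,j ≤ 3} / 16`. These agree by the `sl(2)` identity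
`tr(A[B,C])² = -2 det Gram(A,B,C)` for traceless `2 × 2` matrices.
-/

open Matrix

theorem trace_mul_commutator_self {ι R : Type*} [Fintype ι] [CommRing R] (A C : Matrix ι ι R) :
    (A * (A * C - C * A)).trace = 0 := by
  rw [mul_sub, trace_sub, ← Matrix.mul_assoc A C A, trace_mul_comm (A * C) A, sub_self]

theorem trace_mul_commutator_sq_fin_two {R : Type*} [CommRing R]
    {A B C : Matrix (Fin 2) (Fin 2) R} (hA : A.trace = 0) (hB : B.trace = 0) (hC : C.trace = 0) :
    (A * (B * C - C * B)).trace ^ 2 = -2 * !![(A * A).trace, (A * B).trace, (A * C).trace;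
      (A * B).trace, (B * B).trace, (B * C).trace;
      (A * C).trace, (B * C).trace, (C * C).trace].det := by
  rw [trace_fin_two, add_eq_zero_iff_eq_neg'] at hA hB hC
  simp [det_fin_three, trace_fin_two, mul_apply, Fin.sum_univ_two, hA, hB, hC]
  ring

section Schlesinger

variable {X ι : Type*} [Fintype ι]

def traceMul {R : Type*} [CommRing R] (F G : X → Matrix ι ι R) : X → R :=
  fun x => (F x * G x).trace

theorem traceMul_comm {R : Type*} [CommRing R] (F G : X → Matrix ι ι R) :
    traceMul F G = traceMul G F :=
  funext fun x => trace_mul_comm (F x) (G x)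

theorem leibniz_traceMul {R : Type*} [CommRing R] {D : (X → Matrix ι ι R) → X → Matrix ι ι R}
    {d : (X → R) → X → R} (hD : ∀ F G, D (F * G) = D F * G + F * D G)
    (hd : ∀ F, d (fun x => (F x).trace) = fun x => (D F x).trace) (F G : X → Matrix ι ι R) :
    d (traceMul F G) = traceMul (D F) G + traceMul F (D G) := by
  change d (fun x => ((F * G) x).trace) = _
  rw [hd, hD]
  funext x
  simp only [Pi.add_apply, Pi.mul_apply, trace_add, traceMul]

structure IsSchlesingerSystem {R : Type*} [CommRing R] (B : ℤ → X → Matrix ι ι R)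
    (Lm : ℤ → (X → Matrix ι ι R) →ₗ[R] (X → Matrix ι ι R)) (Ls : ℤ → (X → R) →ₗ[R] (X → R)) :
    Prop where
  leibniz : ∀ m : ℤ, -1 ≤ m → ∀ F G : X → Matrix ι ι R, Lm m (F * G) = Lm m F * G + F * Lm m G
  trace_comm : ∀ m : ℤ, -1 ≤ m → ∀ F : X → Matrix ι ι R,
    Ls m (fun x => (F x).trace) = fun x => (Lm m F x).trace
  schlesinger : ∀ m n : ℤ, -1 ≤ m → 1 ≤ n →
    Lm m (B n) = (∑ k ∈ Finset.Icc 1 (n - 1), (B k * B (m + n - k) - B (m + n - k) * B k)) +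
      (n : R) • B (m + n)

namespace IsSchlesingerSystem

variable {R : Type*} [CommRing R] {B : ℤ → X → Matrix ι ι R}
  {Lm : ℤ → (X → Matrix ι ι R) →ₗ[R] (X → Matrix ι ι R)} {Ls : ℤ → (X → R) →ₗ[R] (X → R)}

theorem Lm_B_one (hS : IsSchlesingerSystem B Lm Ls) {m : ℤ} (hm : -1 ≤ m) :
    Lm m (B 1) = B (m + 1) := by
  simpa using hS.schlesinger m 1 hm le_rfl

theorem Lm_three_B_two (hS : IsSchlesingerSystem B Lm Ls) :
    Lm 3 (B 2) = B 1 * B 4 - B 4 * B 1 + (2 : R) • B 5 := by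
  simpa [Finset.Icc_ofNat_ofNat] using hS.schlesinger 3 2 (by norm_num) (by norm_num)

theorem Lm_two_B_three (hS : IsSchlesingerSystem B Lm Ls) :
    Lm 2 (B 3) = B 1 * B 4 - B 4 * B 1 + (B 2 * B 3 - B 3 * B 2) + (3 : R) • B 5 := by
  rw [hS.schlesinger 2 3 (by norm_num) (by norm_num)]
  simp [Finset.Icc_ofNat_ofNat]
  abel

theorem Ls_traceMul (hS : IsSchlesingerSystem B Lm Ls) {m : ℤ} (hm : -1 ≤ m)
    (F G : X → Matrix ι ι R) :
    Ls m (traceMul F G) = traceMul (Lm m F) G + traceMul F (Lm m G) :=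
  leibniz_traceMul (hS.leibniz m hm) (hS.trace_comm m hm) F G

end IsSchlesingerSystem

section Hamiltonian

variable {K : Type*} [Field K] {B : ℤ → X → Matrix ι ι K}

noncomputable def hamiltonian (B : ℤ → X → Matrix ι ι K) (n : ℤ) : X → K :=
  fun x => -(1 / 4 : K) * ∑ k ∈ Finset.Icc 0 n, (B k x * B (n - k) x).trace

theorem hamiltonian_two (hB0 : B 0 = 0) :
    hamiltonian B 2 = -(1 / 4 : K) • traceMul (B 1) (B 1) := by
  funext x
  simp [hamiltonian, traceMul, Finset.Icc_ofNat_ofNat, hB0]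

theorem hamiltonian_three (hB0 : B 0 = 0) :
    hamiltonian B 3 = -(1 / 4 : K) • ((2 : K) • traceMul (B 1) (B 2)) := by
  funext x
  simp [hamiltonian, traceMul, Finset.Icc_ofNat_ofNat, hB0, trace_mul_comm (B 2 x),
    -mul_eq_mul_left_iff]
  ring

theorem hamiltonian_four (hB0 : B 0 = 0) :
    hamiltonian B 4 = -(1 / 4 : K) • ((2 : K) • traceMul (B 1) (B 3) + traceMul (B 2) (B 2)) := by
  funext x
  simp [hamiltonian, traceMul, Finset.Icc_ofNat_ofNat, hB0, trace_mul_comm (B 3 x),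
    -mul_eq_mul_left_iff]
  ring

theorem hamiltonian_five (hB0 : B 0 = 0) :
    hamiltonian B 5 =
      -(1 / 4 : K) • ((2 : K) • traceMul (B 1) (B 4) + (2 : K) • traceMul (B 2) (B 3)) := by
  funext x
  simp [hamiltonian, traceMul, Finset.Icc_ofNat_ofNat, hB0, trace_mul_comm (B 3 x),
    trace_mul_comm (B 4 x), -mul_eq_mul_left_iff]
  ring

theorem hamiltonian_six (hB0 : B 0 = 0) :
    hamiltonian B 6 = -(1 / 4 : K) • ((2 : K) • traceMul (B 1) (B 5) +
      (2 : K) • traceMul (B 2) (B 4) + traceMul (B 3) (B 3)) := by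
  funext x
  simp [hamiltonian, traceMul, Finset.Icc_ofNat_ofNat, hB0, trace_mul_comm (B 4 x),
    trace_mul_comm (B 5 x), -mul_eq_mul_left_iff]
  ring

end Hamiltonian

namespace IsSchlesingerSystem

variable {K : Type*} [Field K] {B : ℤ → X → Matrix ι ι K}
  {Lm : ℤ → (X → Matrix ι ι K) →ₗ[K] (X → Matrix ι ι K)} {Ls : ℤ → (X → K) →ₗ[K] (X → K)}

theorem Ls_hamiltonian_two (hS : IsSchlesingerSystem B Lm Ls) (hB0 : B 0 = 0) (m : ℤ)
    (hm : -1 ≤ m) :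
    Ls m (hamiltonian B 2) = -(1 / 4 : K) • ((2 : K) • traceMul (B 1) (B (m + 1))) := by
  rw [hamiltonian_two hB0, map_smul, hS.Ls_traceMul hm, hS.Lm_B_one hm,
    traceMul_comm (B (m + 1)), two_smul]

theorem Ls_two_Ls_two_hamiltonian_two (hS : IsSchlesingerSystem B Lm Ls) (hB0 : B 0 = 0) :
    Ls 2 (Ls 2 (hamiltonian B 2)) = -(1 / 4 : K) • ((2 : K) • traceMul (B 3) (B 3) +
      (2 : K) • traceMul (B 1) (B 2 * B 3 - B 3 * B 2) + (6 : K) • traceMul (B 1) (B 5)) := by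
  rw [hS.Ls_hamiltonian_two hB0 2 (by norm_num), show (2 : ℤ) + 1 = 3 by norm_num, map_smul,
    map_smul, hS.Ls_traceMul (by norm_num), hS.Lm_B_one (by norm_num), hS.Lm_two_B_three]
  funext x
  simp [traceMul, mul_add, trace_mul_commutator_self, -mul_eq_mul_left_iff]
  ring

theorem Ls_three_hamiltonian_three (hS : IsSchlesingerSystem B Lm Ls) (hB0 : B 0 = 0) :
    Ls 3 (hamiltonian B 3) =
      -(1 / 4 : K) • ((2 : K) • traceMul (B 2) (B 4) + (4 : K) • traceMul (B 1) (B 5)) := by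
  rw [hamiltonian_three hB0, map_smul, map_smul, hS.Ls_traceMul (by norm_num),
    hS.Lm_B_one (by norm_num), hS.Lm_three_B_two]
  funext x
  simp [traceMul, mul_add, trace_mul_commutator_self, trace_mul_comm (B 4 x),
    -mul_eq_mul_left_iff]
  ring

end IsSchlesingerSystem

end Schlesinger

theorem generalized_okamoto_third_order_general {X : Type*}
    (B : ℤ → X → Matrix (Fin 2) (Fin 2) ℂ) (hB0 : B 0 = 0)
    (hTr0 : ∀ n : ℤ, ∀ x, (B n x).trace = 0)
    (Lm : ℤ → (X → Matrix (Fin 2) (Fin 2) ℂ) →ₗ[ℂ] (X → Matrix (Fin 2) (Fin 2) ℂ))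
    (Ls : ℤ → (X → ℂ) →ₗ[ℂ] (X → ℂ))
    (hLeib : ∀ m : ℤ, -1 ≤ m → ∀ F G : X → Matrix (Fin 2) (Fin 2) ℂ,
      Lm m (F * G) = Lm m F * G + F * Lm m G)
    (hTr : ∀ m : ℤ, -1 ≤ m → ∀ F : X → Matrix (Fin 2) (Fin 2) ℂ,
      Ls m (fun x => (F x).trace) = fun x => ((Lm m F) x).trace)
    (hSch : ∀ m n : ℤ, -1 ≤ m → 1 ≤ n →
      Lm m (B n) = (∑ k ∈ Finset.Icc 1 (n - 1),
          (B k * B (m + n - k) - B (m + n - k) * B k)) + (n : ℂ) • B (m + n))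
    (H : ℤ → X → ℂ)
    (hH : ∀ n, H n = fun x => -(1/4 : ℂ) * ∑ k ∈ Finset.Icc 0 n, (B k x * B (n - k) x).trace) :
    (1/8 : ℂ) •
        ((Ls 2 (Ls 2 (H 2)) + (2 : ℂ) • Ls 3 (H 3) - (5 : ℂ) • Ls 4 (H 2) - (2 : ℂ) • H 6) *
         (Ls 2 (Ls 2 (H 2)) + (2 : ℂ) • Ls 3 (H 3) - (5 : ℂ) • Ls 4 (H 2) - (2 : ℂ) • H 6)) =
      (Ls 3 (H 3) - Ls 4 (H 2) - H 6) *
          (H 3 * H 3 + (4 : ℂ) • (H 2 * (Ls 2 (H 2) - H 4)))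
        - (Ls 3 (H 2) - H 5) *
          (H 2 * Ls 3 (H 2) + H 3 * Ls 2 (H 2) - H 2 * H 5)
        + (Ls 2 (H 2) - H 4) * (Ls 2 (H 2) * Ls 2 (H 2)) := by
  have hS : IsSchlesingerSystem B Lm Ls := ⟨hLeib, hTr, hSch⟩
  obtain rfl : H = hamiltonian B := funext hH
  rw [hS.Ls_two_Ls_two_hamiltonian_two hB0, hS.Ls_three_hamiltonian_three hB0,
    hS.Ls_hamiltonian_two hB0 2 (by norm_num), hS.Ls_hamiltonian_two hB0 3 (by norm_num),
    hS.Ls_hamiltonian_two hB0 4 (by norm_num), hamiltonian_two hB0, hamiltonian_three hB0,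
    hamiltonian_four hB0, hamiltonian_five hB0, hamiltonian_six hB0]
  funext x
  have hsl2 := trace_mul_commutator_sq_fin_two (hTr0 1 x) (hTr0 2 x) (hTr0 3 x)
  simp only [det_fin_three, of_apply, cons_val', cons_val_zero, cons_val_fin_one, cons_val_one,
    cons_val] at hsl2
  simp only [Pi.add_apply, Pi.sub_apply, Pi.mul_apply, Pi.smul_apply, smul_eq_mul, traceMul,
    Int.reduceAdd]
  linear_combination (1 / 32 : ℂ) * hsl2

/-- The generalized Okamoto equation (third order, cubic nonlinearity) for an arbitrary
`2×2` Schlesinger system, in terms of the modified Hamiltonians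
`Ĥ_n := -(1/4) ∑_{k=0}^n tr(B_k B_{n-k})` and the Virasoro generators `L_m`:
`(1/8)(L₂L₂Ĥ₂ + 2L₃Ĥ₃ - 5L₄Ĥ₂ - 2Ĥ₆)² = (L₃Ĥ₃ - L₄Ĥ₂ - Ĥ₆)(Ĥ₃² + 4Ĥ₂(L₂Ĥ₂ - Ĥ₄))
  - (L₃Ĥ₂ - Ĥ₅)(Ĥ₂L₃Ĥ₂ + Ĥ₃L₂Ĥ₂ - Ĥ₂Ĥ₅) + (L₂Ĥ₂ - Ĥ₄)(L₂Ĥ₂)²`,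
products of scalar functions being taken pointwise. -/
theorem generalized_okamoto_third_order {X : Type*}
    (B : ℤ → X → Matrix (Fin 2) (Fin 2) ℂ) (hB0 : B 0 = 0)
    (hTr0 : ∀ n : ℤ, ∀ x, (B n x).trace = 0)
    (Lm : ℤ → (X → Matrix (Fin 2) (Fin 2) ℂ) →ₗ[ℂ] (X → Matrix (Fin 2) (Fin 2) ℂ))
    (Ls : ℤ → (X → ℂ) →ₗ[ℂ] (X → ℂ))
    (hLeib : ∀ m : ℤ, -1 ≤ m → ∀ F G : X → Matrix (Fin 2) (Fin 2) ℂ,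
      Lm m (F * G) = Lm m F * G + F * Lm m G)
    (hTr : ∀ m : ℤ, -1 ≤ m → ∀ F : X → Matrix (Fin 2) (Fin 2) ℂ,
      Ls m (fun x => (F x).trace) = fun x => ((Lm m F) x).trace)
    (hVir : ∀ m n : ℤ, -1 ≤ m → -1 ≤ n → ∀ g : X → ℂ,
      Ls m (Ls n g) - Ls n (Ls m g) = ((n - m : ℤ) : ℂ) • Ls (m + n) g)
    (hSch : ∀ m n : ℤ, -1 ≤ m → 1 ≤ n →
      Lm m (B n) = (∑ k ∈ Finset.Icc 1 (n - 1),
          (B k * B (m + n - k) - B (m + n - k) * B k)) + (n : ℂ) • B (m + n))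
    (H : ℤ → X → ℂ)
    (hH : ∀ n, H n = fun x => -(1/4 : ℂ) * ∑ k ∈ Finset.Icc 0 n, (B k x * B (n - k) x).trace) :
    (1/8 : ℂ) •
        ((Ls 2 (Ls 2 (H 2)) + (2 : ℂ) • Ls 3 (H 3) - (5 : ℂ) • Ls 4 (H 2) - (2 : ℂ) • H 6) *
         (Ls 2 (Ls 2 (H 2)) + (2 : ℂ) • Ls 3 (H 3) - (5 : ℂ) • Ls 4 (H 2) - (2 : ℂ) • H 6)) =
      (Ls 3 (H 3) - Ls 4 (H 2) - H 6) *
          (H 3 * H 3 + (4 : ℂ) • (H 2 * (Ls 2 (H 2) - H 4)))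
        - (Ls 3 (H 2) - H 5) *
          (H 2 * Ls 3 (H 2) + H 3 * Ls 2 (H 2) - H 2 * H 5)
        + (Ls 2 (H 2) - H 4) * (Ls 2 (H 2) * Ls 2 (H 2)) :=
  generalized_okamoto_third_order_general B hB0 hTr0 Lm Ls hLeib hTr hSch H hH
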